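/- Let G be a countable discrete amenable group. Then for every ε > 0, every Hilbert space H, and every unitary ε-representation φ: G → U(H), there exists a positive definite map ψ: G → B(H) such that ‖φ(x) − ψ(x)‖ ≤ ε for all x ∈ G. -/

import Mathlib

open scoped ComplexOrder

/-- `f : G → ℂ` is bounded, i.e. `f ∈ ℓ∞(G)`. -/
def IsBddFun {G : Type*} (f : G → ℂ) : Prop := ∃ C : ℝ, ∀ x, ‖f x‖ ≤ C

/-- A state on `ℓ∞(G)`: a positive unital linear functional, encoded as a functional on
all functions `G → ℂ` whose linearity, positivity and unitality are imposed on bounded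
functions. -/
structure LinftyState (G : Type*) where
  toFun : (G → ℂ) → ℂ
  map_add : ∀ f g : G → ℂ, IsBddFun f → IsBddFun g → toFun (f + g) = toFun f + toFun g
  map_smul : ∀ (c : ℂ) (f : G → ℂ), IsBddFun f → toFun (c • f) = c * toFun f
  pos : ∀ f : G → ℂ, IsBddFun f → (∀ x, 0 ≤ f x) → 0 ≤ toFun f
  unital : toFun (fun _ => (1 : ℂ)) = 1

/-- `G` is amenable: there is a left-invariant mean (state) on `ℓ∞(G)`. -/
def Amenable (G : Type*) [Group G] : Prop :=
  ∃ τ : LinftyState G, ∀ (s : G) (f : G → ℂ), IsBddFun f →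
    τ.toFun (fun x => f (s * x)) = τ.toFun f

/-- A map `ψ : G → B(H)` is positive definite. -/
def PosDefMap {G : Type*} [Group G] {H : Type*} [NormedAddCommGroup H]
    [InnerProductSpace ℂ H] (ψ : G → H →L[ℂ] H) : Prop :=
  ∀ (n : ℕ) (x : Fin n → G) (ξ : Fin n → H),
    0 ≤ ∑ i, ∑ j, (inner ℂ (ψ ((x i)⁻¹ * x j) (ξ j)) (ξ i) : ℂ)

/-!
Let `τ` be a left-invariant mean on `G` and put `ψ(x) := ∫ φ(t⁻¹)* φ(t⁻¹x) dτ(t)`, the integral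
taken weakly: `⟪ψ(x) ξ, η⟫ = τ (t ↦ ⟪φ(t⁻¹x) ξ, φ(t⁻¹) η⟫)`, which is a bounded sesquilinear form
because a state has norm one, hence comes from an operator by the Riesz representation theorem.
Left invariance turns `∑ ⟪ψ(xᵢ⁻¹xⱼ) ξⱼ, ξᵢ⟫` into `τ (t ↦ ‖∑ φ(t⁻¹xⱼ) ξⱼ‖²) ≥ 0`. Since `φ(t⁻¹)*` is
unitary, `‖φ(t⁻¹)* φ(t⁻¹x) - φ(x)‖ = ‖φ(t⁻¹x) - φ(t⁻¹) φ(x)‖ ≤ ε` for every `t`, and averaging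
preserves this bound.
-/

open scoped InnerProductSpace

lemma ContinuousLinearMap.norm_inner_apply_le {E : Type*} [NormedAddCommGroup E]
    [InnerProductSpace ℂ E] {A : E →L[ℂ] E} {C : ℝ} (hA : ‖A‖ ≤ C) (ξ η : E) :
    ‖⟪A ξ, η⟫_ℂ‖ ≤ C * ‖ξ‖ * ‖η‖ :=
  (norm_inner_le_norm _ _).trans <| by
    gcongr
    exact A.le_of_opNorm_le hA ξ

lemma norm_star_mul_le_of_le {A : Type*} [NormedRing A] [StarRing A] [NormedStarGroup A]
    {a b : A} {C D : ℝ} (ha : ‖a‖ ≤ C) (hb : ‖b‖ ≤ D) : ‖star a * b‖ ≤ C * D :=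
  (norm_mul_le _ _).trans <| by
    rw [norm_star]
    exact mul_le_mul ha hb (norm_nonneg _) ((norm_nonneg _).trans ha)

lemma norm_star_mul_sub_of_mem_unitary {A : Type*} [NormedRing A] [StarRing A] [CStarRing A]
    {u : A} (hu : u ∈ unitary A) (a b : A) : ‖star u * a - b‖ = ‖a - u * b‖ := by
  have h : star u * a - b = star u * (a - u * b) := by
    rw [mul_sub, ← mul_assoc, Unitary.star_mul_self_of_mem hu, one_mul]
  rw [h, CStarRing.norm_mem_unitary_mul _ (Unitary.star_mem hu)]

namespace IsBddFun

variable {G : Type*} {f g : G → ℂ}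

lemma const (c : ℂ) : IsBddFun fun _ : G => c := ⟨‖c‖, fun _ => le_rfl⟩

lemma add (hf : IsBddFun f) (hg : IsBddFun g) : IsBddFun (f + g) := by
  obtain ⟨C, hC⟩ := hf
  obtain ⟨D, hD⟩ := hg
  exact ⟨C + D, fun x => (norm_add_le _ _).trans (add_le_add (hC x) (hD x))⟩

lemma sub (hf : IsBddFun f) (hg : IsBddFun g) : IsBddFun (f - g) := by
  obtain ⟨C, hC⟩ := hf
  obtain ⟨D, hD⟩ := hg
  exact ⟨C + D, fun x => (norm_sub_le _ _).trans (add_le_add (hC x) (hD x))⟩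

lemma smul (c : ℂ) (hf : IsBddFun f) : IsBddFun (c • f) := by
  obtain ⟨C, hC⟩ := hf
  exact ⟨‖c‖ * C, fun x => by
    rw [Pi.smul_apply, norm_smul]
    exact mul_le_mul_of_nonneg_left (hC x) (norm_nonneg c)⟩

lemma sum {ι : Type*} (s : Finset ι) {f : ι → G → ℂ} (hf : ∀ i ∈ s, IsBddFun (f i)) :
    IsBddFun fun t => ∑ i ∈ s, f i t := by
  have h := Finset.sum_induction f IsBddFun (fun _ _ => add) ⟨0, fun _ => by simp⟩ hf
  rwa [Finset.sum_fn] at h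

section Inner

variable {E : Type*} [NormedAddCommGroup E] [InnerProductSpace ℂ E]

lemma inner {a b : G → E} {C D : ℝ} (ha : ∀ t, ‖a t‖ ≤ C) (hb : ∀ t, ‖b t‖ ≤ D) :
    IsBddFun fun t => ⟪a t, b t⟫_ℂ :=
  ⟨C * D, fun t => (norm_inner_le_norm _ _).trans <|
    mul_le_mul (ha t) (hb t) (norm_nonneg _) ((norm_nonneg _).trans (ha t))⟩

lemma inner_apply {T : G → E →L[ℂ] E} {C : ℝ} (hT : ∀ t, ‖T t‖ ≤ C) (ξ η : E) :
    IsBddFun fun t => ⟪T t ξ, η⟫_ℂ :=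
  inner (fun t => (T t).le_of_opNorm_le (hT t) ξ) fun _ => le_rfl

end Inner

end IsBddFun

namespace LinftyState

variable {G : Type*} (τ : LinftyState G)

def IsLeftInvariant [Mul G] : Prop :=
  ∀ (s : G) (f : G → ℂ), IsBddFun f → τ.toFun (fun x => f (s * x)) = τ.toFun f

lemma map_const (c : ℂ) : τ.toFun (fun _ => c) = c := by
  have h : (c • fun _ : G => (1 : ℂ)) = fun _ => c := by funext; simp
  rw [← h, τ.map_smul c _ (IsBddFun.const 1), τ.unital, mul_one]

lemma map_sub {f g : G → ℂ} (hf : IsBddFun f) (hg : IsBddFun g) :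
    τ.toFun (f - g) = τ.toFun f - τ.toFun g := by
  rw [eq_sub_iff_add_eq, ← τ.map_add _ _ (hf.sub hg) hg, sub_add_cancel]

lemma map_sum {ι : Type*} (s : Finset ι) {f : ι → G → ℂ} (hf : ∀ i ∈ s, IsBddFun (f i)) :
    τ.toFun (fun t => ∑ i ∈ s, f i t) = ∑ i ∈ s, τ.toFun (f i) := by
  induction s using Finset.cons_induction with
  | empty => simpa using τ.map_const 0
  | cons i s hi ih =>
    rw [Finset.forall_mem_cons] at hf
    simp only [Finset.sum_cons]
    rw [← ih hf.2]
    exact τ.map_add _ _ hf.1 (IsBddFun.sum s hf.2)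

lemma mono {f g : G → ℂ} (hf : IsBddFun f) (hg : IsBddFun g) (hfg : ∀ x, f x ≤ g x) :
    τ.toFun f ≤ τ.toFun g := by
  rw [← sub_nonneg, ← τ.map_sub hg hf]
  exact τ.pos _ (hg.sub hf) fun x => sub_nonneg.2 (hfg x)

lemma norm_map_le {f : G → ℂ} {C : ℝ} (hC : ∀ x, ‖f x‖ ≤ C) : ‖τ.toFun f‖ ≤ C := by
  set z := τ.toFun f
  -- `c` rotates `z` onto the nonnegative real axis (`c = 0` if `z = 0`)
  set c : ℂ := starRingEnd ℂ z / ‖z‖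
  have hc : ‖c‖ ≤ 1 := by
    rw [norm_div, Complex.norm_conj, Complex.norm_real, norm_norm]
    exact div_self_le_one _
  have hcz : c * z = ‖z‖ := by
    rcases eq_or_ne z 0 with hz | hz
    · simp [hz]
    · rw [div_mul_eq_mul_div, mul_comm, Complex.mul_conj, Complex.normSq_eq_norm_sq]
      field_simp
      push_cast
      ring
  have hcf : ∀ x, ‖c * f x‖ ≤ C := fun x =>
    (norm_mul_le _ _).trans (mul_le_of_le_one_left (norm_nonneg _) hc |>.trans (hC x))
  set u : G → ℂ := fun x => ((c * f x).re : ℂ)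
  set v : G → ℂ := fun x => ((c * f x).im : ℂ)
  have hu : IsBddFun u := ⟨C, fun x => by
    simpa only [u, Complex.norm_real, Real.norm_eq_abs] using
      (Complex.abs_re_le_norm _).trans (hcf x)⟩
  have hv : IsBddFun v := ⟨C, fun x => by
    simpa only [v, Complex.norm_real, Real.norm_eq_abs] using
      (Complex.abs_im_le_norm _).trans (hcf x)⟩
  have hτu : τ.toFun u ≤ C := by
    rw [← τ.map_const (C : ℂ)]
    exact τ.mono hu (IsBddFun.const _) fun x =>
      Complex.real_le_real.2 ((Complex.re_le_norm _).trans (hcf x))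
  have hτv : τ.toFun v ≤ C := by
    rw [← τ.map_const (C : ℂ)]
    exact τ.mono hv (IsBddFun.const _) fun x =>
      Complex.real_le_real.2 ((Complex.im_le_norm _).trans (hcf x))
  have hsplit : (‖z‖ : ℂ) = τ.toFun u + Complex.I * τ.toFun v := by
    have h : c • f = u + Complex.I • v := by
      funext x
      simp only [Pi.add_apply, Pi.smul_apply, smul_eq_mul, u, v, mul_comm Complex.I,
        Complex.re_add_im]
    rw [← hcz, ← τ.map_smul c f ⟨C, hC⟩, h, τ.map_add _ _ hu (hv.smul _), τ.map_smul _ _ hv]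
  have hre := congrArg Complex.re hsplit
  simp only [Complex.ofReal_re, Complex.add_re, Complex.mul_re, Complex.I_re, Complex.I_im] at hre
  rw [Complex.le_def, Complex.ofReal_re, Complex.ofReal_im] at hτu hτv
  linarith [hτu.1, hτv.2]

section Average

variable {E : Type*} [NormedAddCommGroup E] [InnerProductSpace ℂ E]

noncomputable def averageForm (T : G → E →L[ℂ] E) {C : ℝ} (hT : ∀ t, ‖T t‖ ≤ C) :
    E →L⋆[ℂ] E →L[ℂ] ℂ :=
  LinearMap.mkContinuous₂
    (LinearMap.mk₂'ₛₗ (starRingEnd ℂ) (RingHom.id ℂ) (fun ξ η => τ.toFun fun t => ⟪T t ξ, η⟫_ℂ)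
      (fun ξ ξ' η => by
        simp only [_root_.map_add, inner_add_left]
        exact τ.map_add _ _ (IsBddFun.inner_apply hT ξ η) (IsBddFun.inner_apply hT ξ' η))
      (fun c ξ η => by
        simp only [_root_.map_smul, inner_smul_left]
        exact τ.map_smul _ _ (IsBddFun.inner_apply hT ξ η))
      (fun ξ η η' => by
        simp only [inner_add_right]
        exact τ.map_add _ _ (IsBddFun.inner_apply hT ξ η) (IsBddFun.inner_apply hT ξ η'))
      (fun c ξ η => by
        simp only [inner_smul_right]
        exact τ.map_smul _ _ (IsBddFun.inner_apply hT ξ η)))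
    C fun ξ η => τ.norm_map_le fun t => ContinuousLinearMap.norm_inner_apply_le (hT t) ξ η

variable [CompleteSpace E]

/-- The weak operator integral `∫ T t dτ(t)`; `0` if the family `T` is unbounded. -/
noncomputable def average (T : G → E →L[ℂ] E) : E →L[ℂ] E :=
  open Classical in
  if hT : ∃ C, ∀ t, ‖T t‖ ≤ C then
    InnerProductSpace.continuousLinearMapOfBilin (τ.averageForm T hT.choose_spec)
  else 0

lemma inner_average_apply {T : G → E →L[ℂ] E} {C : ℝ} (hT : ∀ t, ‖T t‖ ≤ C) (ξ η : E) :
    ⟪τ.average T ξ, η⟫_ℂ = τ.toFun fun t => ⟪T t ξ, η⟫_ℂ := by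
  rw [average, dif_pos ⟨C, hT⟩, InnerProductSpace.continuousLinearMapOfBilin_apply]
  rfl

lemma norm_average_sub_le {T : G → E →L[ℂ] E} (S : E →L[ℂ] E) {D : ℝ} (hD0 : 0 ≤ D)
    (hD : ∀ t, ‖T t - S‖ ≤ D) : ‖τ.average T - S‖ ≤ D := by
  have hT : ∀ t, ‖T t‖ ≤ ‖S‖ + D := fun t =>
    (norm_le_norm_add_norm_sub' (T t) S).trans (by gcongr; exact hD t)
  refine ContinuousLinearMap.opNorm_le_of_re_inner_le hD0 fun ξ η hξ hη => ?_
  have h : ⟪(τ.average T - S) ξ, η⟫_ℂ = τ.toFun fun t => ⟪(T t - S) ξ, η⟫_ℂ := by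
    have := τ.map_sub (IsBddFun.inner_apply hT ξ η) (IsBddFun.const ⟪S ξ, η⟫_ℂ)
    rw [τ.map_const, ← τ.inner_average_apply hT] at this
    simp only [sub_apply, inner_sub_left]
    exact this.symm
  calc RCLike.re ⟪(τ.average T - S) ξ, η⟫_ℂ ≤ ‖⟪(τ.average T - S) ξ, η⟫_ℂ‖ := RCLike.re_le_norm _
    _ ≤ D * ‖ξ‖ * ‖η‖ :=
      h ▸ τ.norm_map_le fun t => ContinuousLinearMap.norm_inner_apply_le (hD t) ξ η
    _ = D := by rw [hξ, hη, mul_one, mul_one]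

variable [Group G] {φ : G → E →L[ℂ] E} {C : ℝ}

lemma inner_average_star_mul_apply (hτ : τ.IsLeftInvariant) (hφ : ∀ t, ‖φ t‖ ≤ C)
    (y z : G) (ξ η : E) :
    ⟪τ.average (fun t => star (φ t⁻¹) * φ (t⁻¹ * (y⁻¹ * z))) ξ, η⟫_ℂ =
      τ.toFun fun t => ⟪φ (t⁻¹ * z) ξ, φ (t⁻¹ * y) η⟫_ℂ := by
  have hb : IsBddFun fun t => ⟪φ (t⁻¹ * z) ξ, φ (t⁻¹ * y) η⟫_ℂ :=
    IsBddFun.inner (fun t => (φ _).le_of_opNorm_le (hφ _) ξ) fun t => (φ _).le_of_opNorm_le (hφ _) η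
  rw [τ.inner_average_apply fun t => norm_star_mul_le_of_le (hφ t⁻¹) (hφ _), ← hτ y _ hb]
  congr 1
  funext t
  rw [ContinuousLinearMap.star_eq_adjoint, mul_apply_eq_comp,
    ContinuousLinearMap.adjoint_inner_left]
  simp only [mul_inv_rev, mul_assoc, inv_mul_cancel, mul_one]

theorem posDefMap_average_star_mul (hτ : τ.IsLeftInvariant) (hφ : ∀ t, ‖φ t‖ ≤ C) :
    PosDefMap fun x => τ.average fun t => star (φ t⁻¹) * φ (t⁻¹ * x) := by
  intro n x ξ
  have ha : ∀ k t, ‖φ (t⁻¹ * x k) (ξ k)‖ ≤ C * ‖ξ k‖ := fun k t =>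
    (φ _).le_of_opNorm_le (hφ _) _
  have hsum : ∀ t, ‖∑ k, φ (t⁻¹ * x k) (ξ k)‖ ≤ ∑ k, C * ‖ξ k‖ := fun t =>
    norm_sum_le_of_le _ fun k _ => ha k t
  have hb : ∀ i j, IsBddFun fun t => ⟪φ (t⁻¹ * x j) (ξ j), φ (t⁻¹ * x i) (ξ i)⟫_ℂ :=
    fun i j => IsBddFun.inner (ha j) (ha i)
  calc (0 : ℂ)
      ≤ τ.toFun fun t => ⟪∑ j, φ (t⁻¹ * x j) (ξ j), ∑ i, φ (t⁻¹ * x i) (ξ i)⟫_ℂ :=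
        τ.pos _ (IsBddFun.inner hsum hsum) fun t => by
          rw [inner_self_eq_norm_sq_to_K]
          positivity
    _ = τ.toFun fun t => ∑ j, ∑ i, ⟪φ (t⁻¹ * x j) (ξ j), φ (t⁻¹ * x i) (ξ i)⟫_ℂ := by
        simp_rw [sum_inner, inner_sum]
    _ = ∑ j, ∑ i, τ.toFun fun t => ⟪φ (t⁻¹ * x j) (ξ j), φ (t⁻¹ * x i) (ξ i)⟫_ℂ := by
        rw [τ.map_sum _ fun j _ => IsBddFun.sum _ fun i _ => hb i j]
        exact Finset.sum_congr rfl fun j _ => τ.map_sum _ fun i _ => hb i j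
    _ = _ := by
        rw [Finset.sum_comm]
        simp_rw [τ.inner_average_star_mul_apply hτ hφ]

end Average

end LinftyState

theorem stmt_14_general (G : Type*) [Group G] (hG : Amenable G) :
    ∀ ε : ℝ, 0 < ε →
      ∀ (H : Type) [NormedAddCommGroup H] [InnerProductSpace ℂ H] [CompleteSpace H],
        ∀ φ : G → H →L[ℂ] H, (∀ x, φ x ∈ unitary (H →L[ℂ] H)) →
          (∀ x y, ‖φ (x * y) - φ x * φ y‖ ≤ ε) →
          ∃ ψ : G → H →L[ℂ] H, PosDefMap ψ ∧ ∀ x, ‖φ x - ψ x‖ ≤ ε := by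
  obtain ⟨τ, hτ⟩ := hG
  intro ε hε H _ _ _ φ hφ hrep
  have hφ1 : ∀ t, ‖φ t‖ ≤ ‖(1 : H →L[ℂ] H)‖ := fun t => by
    simpa using (CStarRing.norm_mem_unitary_mul (1 : H →L[ℂ] H) (hφ t)).le
  refine ⟨fun x => τ.average fun t => star (φ t⁻¹) * φ (t⁻¹ * x),
    τ.posDefMap_average_star_mul hτ hφ1, fun x => ?_⟩
  rw [norm_sub_rev]
  refine τ.norm_average_sub_le _ hε.le fun t => ?_
  rw [norm_star_mul_sub_of_mem_unitary (hφ t⁻¹)]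
  exact hrep t⁻¹ x

/-- If `G` is a countable discrete amenable group, then for every `ε > 0`,
every Hilbert space `H`, and every unitary `ε`-representation `φ : G → U(H)`, there is a
positive definite map `ψ : G → B(H)` with `‖φ(x) - ψ(x)‖ ≤ ε` for all `x ∈ G`. -/
theorem stmt_14 (G : Type*) [Group G] [Countable G] (hG : Amenable G) :
    ∀ ε : ℝ, 0 < ε →
      ∀ (H : Type) [NormedAddCommGroup H] [InnerProductSpace ℂ H] [CompleteSpace H],
        ∀ φ : G → H →L[ℂ] H, (∀ x, φ x ∈ unitary (H →L[ℂ] H)) →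
          (∀ x y, ‖φ (x * y) - φ x * φ y‖ ≤ ε) →
          ∃ ψ : G → H →L[ℂ] H, PosDefMap ψ ∧ ∀ x, ‖φ x - ψ x‖ ≤ ε :=
  stmt_14_general G hG
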